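/- arXiv:2202.00872 — 3 statements merged into one kernel-verified Lean document; each statement's English description precedes it below -/
import Mathlib

section
/- For any probability vector q on a finite set A and any function f: A → R with Σ_a q(a) f(a) = 0, one has max_a f(a) ≤ (√|A| / c) · sqrt(Σ_a (q(a) f(a))^2), where c = Σ_{a ∈ argmax f} q(a), provided c > 0. -/
open Finset

/-! Since `∑ q f = 0`, the contribution `c · max f` of the argmax set is cancelled by the rest,
so it is at most `∑ |q f|`; Cauchy–Schwarz bounds the latter by `√|A| · ‖q f‖₂`. -/

theorem sum_abs_le_sqrt_card_mul_sqrt_sum_sq {ι : Type*} (s : Finset ι) (g : ι → ℝ) :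
    ∑ i ∈ s, |g i| ≤ √(#s : ℝ) * √(∑ i ∈ s, g i ^ 2) := by
  rw [← Real.sqrt_mul (Nat.cast_nonneg _)]
  apply Real.le_sqrt_of_sq_le
  simpa only [sq_abs] using sq_sum_le_card_mul_sum_sq (s := s) (f := fun i => |g i|)

theorem sum_filter_le_sum_abs_of_sum_eq_zero {ι : Type*} (s : Finset ι) (p : ι → Prop)
    [DecidablePred p] (g : ι → ℝ) (h : ∑ i ∈ s, g i = 0) :
    ∑ i ∈ s with p i, g i ≤ ∑ i ∈ s, |g i| := by
  have hsplit := sum_filter_add_sum_filter_not s p g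
  calc ∑ i ∈ s with p i, g i = ∑ i ∈ s with ¬p i, -g i := by
        rw [sum_neg_distrib]; linarith
    _ ≤ ∑ i ∈ s with ¬p i, |g i| := sum_le_sum fun i _ => neg_le_abs (g i)
    _ ≤ ∑ i ∈ s, |g i| :=
        sum_le_sum_of_subset_of_nonneg (filter_subset _ _) fun i _ _ => abs_nonneg (g i)

theorem lojasiewicz_core_general {A : Type*} [Fintype A] [Nonempty A]
    (q f : A → ℝ)
    (hqf : ∑ a, q a * f a = 0)
    (c : ℝ)
    (hc : c = ∑ a ∈ Finset.univ.filter
        (fun a => f a = Finset.univ.sup' Finset.univ_nonempty f), q a)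
    (hcpos : 0 < c) :
    Finset.univ.sup' Finset.univ_nonempty f ≤
      (Real.sqrt (Fintype.card A) / c) * Real.sqrt (∑ a, (q a * f a) ^ 2) := by
  set M := univ.sup' univ_nonempty f
  have hmass : c * M ≤ ∑ a, |q a * f a| :=
    calc c * M = ∑ a with f a = M, q a * f a := by
          rw [hc, sum_mul]
          exact sum_congr rfl fun a ha => by rw [(mem_filter.mp ha).2]
      _ ≤ ∑ a, |q a * f a| := sum_filter_le_sum_abs_of_sum_eq_zero _ _ _ hqf
  rw [div_mul_eq_mul_div, le_div_iff₀ hcpos, mul_comm]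
  exact hmass.trans (sum_abs_le_sqrt_card_mul_sqrt_sum_sq univ fun a => q a * f a)

/-- Core inequality of the non-uniform Łojasiewicz lemma: if `q` is a probability vector,
`∑_a q(a) f(a) = 0`, and `c` is the `q`-mass of the argmax set of `f` with `c > 0`, then
`max_a f(a) ≤ (√|A|/c) · sqrt(∑_a (q(a) f(a))²)`. -/
theorem lojasiewicz_core {A : Type*} [Fintype A] [Nonempty A] [DecidableEq A]
    (q f : A → ℝ) (hq0 : ∀ a, 0 ≤ q a) (hq1 : ∑ a, q a = 1)
    (hqf : ∑ a, q a * f a = 0)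
    (c : ℝ)
    (hc : c = ∑ a ∈ Finset.univ.filter
        (fun a => f a = Finset.univ.sup' Finset.univ_nonempty f), q a)
    (hcpos : 0 < c) :
    Finset.univ.sup' Finset.univ_nonempty f ≤
      (Real.sqrt (Fintype.card A) / c) * Real.sqrt (∑ a, (q a * f a) ^ 2) :=
  lojasiewicz_core_general q f hqf c hc hcpos
end

section
/- Let q be a probability distribution on a finite set A, f: A → R with Σ_a q(a) f(a) = 0 and |η f(a)| ≤ 1 for all a, and let c := Σ_{a ∈ argmax f} q(a). Then Z := Σ_a q(a) exp(η f(a)) ≥ 1 + (c/2)·(η max_a f(a))². Consequently, if additionally (c/2)(η max f)² ≤ 1/2, then log Z ≥ (c/3)(η max_a f(a))². -/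
open Finset

/-- Sufficient ascent per natural-gradient step: with `∑_a q(a) f(a) = 0`, `|η f(a)| ≤ 1`,
and `c` the `q`-mass of `argmax f`, the normalization `Z = ∑_a q(a) exp(η f(a))` satisfies
`Z ≥ 1 + (c/2)(η max f)²`; and if moreover `(c/2)(η max f)² ≤ 1/2` then
`log Z ≥ (c/3)(η max f)²`. -/
theorem softmax_normalization_sufficient_ascent {A : Type*} [Fintype A] [Nonempty A]
    [DecidableEq A]
    (q f : A → ℝ) (hq0 : ∀ a, 0 ≤ q a) (hq1 : ∑ a, q a = 1)
    (hqf : ∑ a, q a * f a = 0)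
    (η : ℝ) (hη : 0 < η) (hbd : ∀ a, |η * f a| ≤ 1)
    (c : ℝ)
    (hc : c = ∑ a ∈ Finset.univ.filter
        (fun a => f a = Finset.univ.sup' Finset.univ_nonempty f), q a)
    (Z : ℝ) (hZ : Z = ∑ a, q a * Real.exp (η * f a)) :
    Z ≥ 1 + (c / 2) * (η * Finset.univ.sup' Finset.univ_nonempty f) ^ 2 ∧
    ((c / 2) * (η * Finset.univ.sup' Finset.univ_nonempty f) ^ 2 ≤ 1 / 2 →
      Real.log Z ≥ (c / 3) * (η * Finset.univ.sup' Finset.univ_nonempty f) ^ 2) := by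
  set M := Finset.univ.sup' Finset.univ_nonempty f with hM
  have hfM : ∀ a, f a ≤ M := fun a => Finset.le_sup' f (mem_univ a)
  have hM0 : 0 ≤ M := by
    by_contra h
    push_neg at h
    have h2 : ∑ a, q a * f a ≤ ∑ a, q a * M :=
      Finset.sum_le_sum fun a _ => mul_le_mul_of_nonneg_left (hfM a) (hq0 a)
    have h3 : ∑ a, q a * M = M := by rw [← Finset.sum_mul, hq1, one_mul]
    rw [hqf, h3] at h2
    linarith
  have hc0 : 0 ≤ c := by
    rw [hc]; exact Finset.sum_nonneg fun a _ => hq0 a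
  have key : ∀ a ∈ Finset.univ (α := A),
      q a * (1 + η * f a + (if f a = M then (η * M) ^ 2 / 2 else 0))
        ≤ q a * Real.exp (η * f a) := by
    intro a _
    apply mul_le_mul_of_nonneg_left _ (hq0 a)
    split_ifs with h
    · rw [h]
      have := Real.quadratic_le_exp_of_nonneg (mul_nonneg hη.le hM0)
      linarith
    · have := Real.add_one_le_exp (η * f a)
      linarith
  have e1 : ∑ a, q a * (1 + η * f a + (if f a = M then (η * M) ^ 2 / 2 else 0))
      = 1 + c * ((η * M) ^ 2 / 2) := by
    have t1 : ∀ a, q a * (1 + η * f a + (if f a = M then (η * M) ^ 2 / 2 else 0))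
        = q a + η * (q a * f a) + (if f a = M then q a * ((η * M) ^ 2 / 2) else 0) := by
      intro a
      split_ifs <;> ring
    simp only [t1]
    rw [Finset.sum_add_distrib, Finset.sum_add_distrib, hq1, ← Finset.mul_sum, hqf,
      mul_zero, ← Finset.sum_filter, ← Finset.sum_mul, ← hc]
    ring
  have hZ1 : 1 + (c / 2) * (η * M) ^ 2 ≤ Z := by
    have := Finset.sum_le_sum key
    rw [e1] at this
    rw [hZ]
    calc 1 + (c / 2) * (η * M) ^ 2 = 1 + c * ((η * M) ^ 2 / 2) := by ring
      _ ≤ _ := this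
  refine ⟨hZ1, fun hx => ?_⟩
  set x := (c / 2) * (η * M) ^ 2 with hxdef
  have hx0 : 0 ≤ x := mul_nonneg (by linarith) (sq_nonneg _)
  have hZpos : 0 < Z := by linarith
  have hexp : Real.exp (2 / 3 * x) ≤ Z := by
    have h1 : (0:ℝ) ≤ 2 / 3 * x := by linarith
    have h2 : 2 / 3 * x ≤ 1 := by linarith
    have hb := Real.exp_bound' h1 h2 (n := 2) (by norm_num)
    have hs : (∑ m ∈ Finset.range 2, (2 / 3 * x) ^ m / m.factorial) = 1 + 2 / 3 * x := by
      simp [Finset.sum_range_succ]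
    rw [hs] at hb
    have : 1 + 2 / 3 * x + (2 / 3 * x) ^ 2 * (2 + 1) / (Nat.factorial 2 * 2) ≤ 1 + x := by
      simp only [Nat.factorial]
      push_cast
      nlinarith
    calc Real.exp (2 / 3 * x) ≤ _ := hb
      _ ≤ 1 + x := by push_cast at this ⊢; linarith
      _ ≤ Z := hZ1
  have := (Real.le_log_iff_exp_le hZpos).2 hexp
  calc (c / 3) * (η * M) ^ 2 = 2 / 3 * x := by rw [hxdef]; ring
    _ ≤ Real.log Z := this
end

section
/- Let P and Q be transition kernels induced by two policies π' and π on a finite MDP with discount γ ∈ [0,1). For any reward r: S×A → [−1,1] with values bounded by 1 in absolute value, the difference in discounted state-action occupancy measures satisfies (1/(1−γ)) Σ_{s,a} |d_{π'}(s)π'(a|s) − d_π(s)π(a|s)| ≤ (1/(1−γ)²) max_s Σ_a |π'(a|s) − π(a|s)|. -/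
open Matrix Finset

/-- The state transition matrix induced by a policy `π` on an MDP with kernel `P`:
`K_π(s, s') = ∑_a π(a|s) P(s'|s,a)`. -/
noncomputable def policyKernel {S A : Type*} [Fintype A]
    (P : S → A → S → ℝ) (π : S → A → ℝ) : Matrix S S ℝ :=
  fun s s' => ∑ a, π s a * P s a s'

/-- The discounted state visitation distribution
`d_π(s) = (1 − γ) ∑_t γ^t Pr^π(s_t = s)` starting from the initial distribution `ρ`. -/
noncomputable def discountedVisitation {S A : Type*} [Fintype S] [DecidableEq S] [Fintype A]
    (γ : ℝ) (ρ : S → ℝ) (P : S → A → S → ℝ) (π : S → A → ℝ) (s : S) : ℝ :=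
  (1 - γ) * ∑' t : ℕ, γ ^ t * (Matrix.vecMul ρ (policyKernel P π ^ t)) s

/-!
The visitation vector `d_π` is the fixed point of `d = (1 - γ) ρ + γ d K_π`. Subtracting the
equations for `π'` and `π` gives `d' - d = γ (d' (K' - K) + (d' - d) K)`; as `K` is an
`ℓ¹`-contraction and every row of `K' - K` has `ℓ¹`-mass at most `ε = max_s ‖π' s - π s‖₁`,
this yields `‖d' - d‖₁ ≤ γ ε / (1 - γ)`. Writing `d' π' - d π = d' (π' - π) + (d' - d) π`
bounds the occupancy difference by `ε + γ ε / (1 - γ) = ε / (1 - γ)`.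
-/

section VecMul

variable {m n : Type*} [Fintype m] [Fintype n]

theorem sum_abs_vecMul_le (w : m → ℝ) (M : Matrix m n ℝ) :
    ∑ j, |(w ᵥ* M) j| ≤ ∑ i, |w i| * ∑ j, |M i j| := by
  calc ∑ j, |(w ᵥ* M) j| ≤ ∑ j, ∑ i, |w i| * |M i j| := by
        gcongr with j
        simpa only [vecMul, dotProduct, abs_mul] using
          abs_sum_le_sum_abs (fun i => w i * M i j) univ
    _ = ∑ i, |w i| * ∑ j, |M i j| := by rw [sum_comm]; simp only [mul_sum]

variable [DecidableEq n] {M : Matrix n n ℝ}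

theorem sum_vecMul_of_mem_rowStochastic (hM : M ∈ rowStochastic ℝ n) (w : n → ℝ) :
    ∑ j, (w ᵥ* M) j = ∑ i, w i := by
  rw [← dotProduct_one, ← dotProduct_one, ← dotProduct_mulVec, one_vecMul_of_mem_rowStochastic hM]

theorem sum_abs_vecMul_le_of_mem_rowStochastic (hM : M ∈ rowStochastic ℝ n) (w : n → ℝ) :
    ∑ j, |(w ᵥ* M) j| ≤ ∑ i, |w i| := by
  refine (sum_abs_vecMul_le w M).trans_eq (sum_congr rfl fun i _ => ?_)
  simp only [abs_of_nonneg (nonneg_of_mem_rowStochastic hM), sum_row_of_mem_rowStochastic hM,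
    mul_one]

theorem vecMul_mem_stdSimplex (hM : M ∈ rowStochastic ℝ n) {w : n → ℝ}
    (hw : w ∈ stdSimplex ℝ n) : w ᵥ* M ∈ stdSimplex ℝ n :=
  ⟨nonneg_vecMul_of_mem_rowStochastic hM hw.1, (sum_vecMul_of_mem_rowStochastic hM w).trans hw.2⟩

end VecMul

section PolicyKernel

variable {S A : Type*} [Fintype A] {P : S → A → S → ℝ}

theorem policyKernel_sub (π π' : S → A → ℝ) :
    policyKernel P π' - policyKernel P π = policyKernel P (π' - π) := by
  ext s s'
  simp only [policyKernel, Matrix.sub_apply, Pi.sub_apply, sub_mul, sum_sub_distrib]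

theorem sum_abs_policyKernel_le [Fintype S] (hP : ∀ s a, P s a ∈ stdSimplex ℝ S)
    (σ : S → A → ℝ) (s : S) :
    ∑ s', |policyKernel P σ s s'| ≤ ∑ a, |σ s a| := by
  refine (sum_abs_vecMul_le (σ s) (P s)).trans_eq (sum_congr rfl fun a _ => ?_)
  simp only [abs_of_nonneg ((hP s a).1 _), (hP s a).2, mul_one]

theorem policyKernel_mem_rowStochastic [Fintype S] [DecidableEq S]
    (hP : ∀ s a, P s a ∈ stdSimplex ℝ S) {π : S → A → ℝ} (hπ : ∀ s, π s ∈ stdSimplex ℝ A) :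
    policyKernel P π ∈ rowStochastic ℝ S := by
  refine mem_rowStochastic_iff_sum.2
    ⟨fun s s' => sum_nonneg fun a _ => mul_nonneg ((hπ s).1 a) ((hP s a).1 s'), fun s => ?_⟩
  simp only [policyKernel, sum_comm (γ := S), ← mul_sum, (hP s _).2, mul_one, (hπ s).2]

end PolicyKernel

section Visitation

variable {S : Type*} [Fintype S] [DecidableEq S] {K : Matrix S S ℝ} {ρ : S → ℝ} {γ : ℝ}

theorem summable_geometric_smul_vecMul_pow (hK : K ∈ rowStochastic ℝ S)
    (hρ : ρ ∈ stdSimplex ℝ S) (hγ : |γ| < 1) : Summable fun t : ℕ => γ ^ t • ρ ᵥ* (K ^ t) := by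
  refine .of_norm_bounded (summable_geometric_of_lt_one (abs_nonneg γ) hγ) fun t => ?_
  have hρt : ρ ᵥ* (K ^ t) ∈ stdSimplex ℝ S := vecMul_mem_stdSimplex (pow_mem hK t) hρ
  have := mem_closedBall_zero_iff.1 (stdSimplex_subset_closedBall hρt)
  rw [norm_smul, norm_pow, Real.norm_eq_abs]
  exact mul_le_of_le_one_right (by positivity) this

theorem tsum_geometric_smul_vecMul_pow_eq (h : Summable fun t : ℕ => γ ^ t • ρ ᵥ* (K ^ t)) :
    ∑' t : ℕ, γ ^ t • ρ ᵥ* (K ^ t) = ρ + γ • (∑' t : ℕ, γ ^ t • ρ ᵥ* (K ^ t)) ᵥ* K := by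
  have hmap := (LinearMap.toContinuousLinearMap (vecMulLinear K)).map_tsum h
  simp only [LinearMap.coe_toContinuousLinearMap', vecMulLinear_apply] at hmap
  conv_lhs => rw [h.tsum_eq_zero_add]
  rw [hmap, ← tsum_const_smul'' γ]
  simp only [pow_zero, one_smul, vecMul_one, pow_succ, ← vecMul_vecMul, smul_vecMul,
    smul_smul, mul_comm γ]

variable {A : Type*} [Fintype A] {P : S → A → S → ℝ} {π : S → A → ℝ}

theorem discountedVisitation_eq_smul_tsum
    (h : Summable fun t : ℕ => γ ^ t • ρ ᵥ* (policyKernel P π ^ t)) :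
    discountedVisitation γ ρ P π = (1 - γ) • ∑' t : ℕ, γ ^ t • ρ ᵥ* (policyKernel P π ^ t) := by
  ext s
  simp only [discountedVisitation, Pi.smul_apply, tsum_apply h, smul_eq_mul]

theorem discountedVisitation_eq_add_vecMul (hK : policyKernel P π ∈ rowStochastic ℝ S)
    (hρ : ρ ∈ stdSimplex ℝ S) (hγ : |γ| < 1) :
    discountedVisitation γ ρ P π =
      (1 - γ) • ρ + γ • discountedVisitation γ ρ P π ᵥ* policyKernel P π := by
  have h := summable_geometric_smul_vecMul_pow hK hρ hγ
  rw [discountedVisitation_eq_smul_tsum h]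
  conv_lhs => rw [tsum_geometric_smul_vecMul_pow_eq h]
  rw [smul_add, smul_vecMul, smul_comm (1 - γ) γ]

theorem discountedVisitation_mem_stdSimplex (hK : policyKernel P π ∈ rowStochastic ℝ S)
    (hρ : ρ ∈ stdSimplex ℝ S) (hγ0 : 0 ≤ γ) (hγ1 : γ < 1) :
    discountedVisitation γ ρ P π ∈ stdSimplex ℝ S := by
  have hγ : |γ| < 1 := abs_lt.2 ⟨by linarith, hγ1⟩
  refine ⟨fun s => mul_nonneg (by linarith) (tsum_nonneg fun t =>
    mul_nonneg (pow_nonneg hγ0 t) ((vecMul_mem_stdSimplex (pow_mem hK t) hρ).1 s)), ?_⟩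
  have hsum := congrArg (fun v : S → ℝ => ∑ s, v s) (discountedVisitation_eq_add_vecMul hK hρ hγ)
  simp only [Pi.add_apply, Pi.smul_apply, smul_eq_mul, sum_add_distrib, ← mul_sum,
    sum_vecMul_of_mem_rowStochastic hK, hρ.2] at hsum
  have : (1 - γ) * ∑ s, discountedVisitation γ ρ P π s = (1 - γ) * 1 := by linarith
  exact mul_left_cancel₀ (by linarith) this

end Visitation

theorem sum_abs_sub_le_of_eq_add_vecMul {S : Type*} [Fintype S] [DecidableEq S]
    {K K' : Matrix S S ℝ} {ρ d d' : S → ℝ} {γ ε : ℝ}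
    (hK : K ∈ rowStochastic ℝ S) (hd' : d' ∈ stdSimplex ℝ S) (hγ0 : 0 ≤ γ) (hγ1 : γ < 1)
    (hKK' : ∀ s, ∑ s', |(K' - K) s s'| ≤ ε)
    (hd : d = (1 - γ) • ρ + γ • d ᵥ* K) (hd'eq : d' = (1 - γ) • ρ + γ • d' ᵥ* K') :
    ∑ s, |d' s - d s| ≤ γ * ε / (1 - γ) := by
  have hdiff : d' - d = γ • (d' ᵥ* (K' - K) + (d' - d) ᵥ* K) := by
    conv_lhs => rw [hd'eq, hd]
    rw [vecMul_sub, sub_vecMul, smul_add, smul_sub, smul_sub]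
    abel
  have hperturb : ∑ s', |(d' ᵥ* (K' - K)) s'| ≤ ε := calc
    _ ≤ ∑ s, |d' s| * ∑ s', |(K' - K) s s'| := sum_abs_vecMul_le d' (K' - K)
    _ = ∑ s, d' s * ∑ s', |(K' - K) s s'| := by simp only [abs_of_nonneg (hd'.1 _)]
    _ ≤ ∑ s, d' s * ε := by
      gcongr with s
      · exact hd'.1 s
      · exact hKK' s
    _ = ε := by rw [← sum_mul, hd'.2, one_mul]
  have hrec : ∑ s, |d' s - d s| ≤ γ * (ε + ∑ s, |d' s - d s|) := calc
    ∑ s, |d' s - d s| = γ * ∑ s, |(d' ᵥ* (K' - K)) s + ((d' - d) ᵥ* K) s| := by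
      rw [mul_sum]
      refine sum_congr rfl fun s _ => ?_
      have hs := congrFun hdiff s
      simp only [Pi.sub_apply, Pi.smul_apply, Pi.add_apply, smul_eq_mul] at hs
      rw [hs, abs_mul, abs_of_nonneg hγ0]
    _ ≤ γ * (∑ s, |(d' ᵥ* (K' - K)) s| + ∑ s, |((d' - d) ᵥ* K) s|) := by
      rw [← sum_add_distrib]
      gcongr
      exact abs_add_le _ _
    _ ≤ γ * (ε + ∑ s, |d' s - d s|) := mul_le_mul_of_nonneg_left
      (add_le_add hperturb (sum_abs_vecMul_le_of_mem_rowStochastic hK (d' - d))) hγ0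
  rw [le_div_iff₀ (by linarith)]
  linarith

theorem sum_abs_mul_sub_mul_le {S A : Type*} [Fintype S] [Fintype A] {d d' : S → ℝ}
    {π π' : S → A → ℝ} {ε : ℝ} (hd' : d' ∈ stdSimplex ℝ S) (hπ : ∀ s, π s ∈ stdSimplex ℝ A)
    (hε : ∀ s, ∑ a, |π' s a - π s a| ≤ ε) :
    ∑ s, ∑ a, |d' s * π' s a - d s * π s a| ≤ ε + ∑ s, |d' s - d s| := calc
  _ ≤ ∑ s, ∑ a, (d' s * |π' s a - π s a| + |d' s - d s| * π s a) := by
    gcongr with s _ a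
    rw [show d' s * π' s a - d s * π s a = d' s * (π' s a - π s a) + (d' s - d s) * π s a by ring]
    refine (abs_add_le _ _).trans_eq ?_
    rw [abs_mul, abs_mul, abs_of_nonneg (hd'.1 s), abs_of_nonneg ((hπ s).1 a)]
  _ = ∑ s, d' s * ∑ a, |π' s a - π s a| + ∑ s, |d' s - d s| := by
    have hπ1 (s : S) : ∑ a, π s a = 1 := (hπ s).2
    simp only [sum_add_distrib, ← mul_sum, hπ1, mul_one]
  _ ≤ ∑ s, d' s * ε + ∑ s, |d' s - d s| := by
    gcongr with s
    · exact hd'.1 s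
    · exact hε s
  _ = ε + ∑ s, |d' s - d s| := by rw [← sum_mul, hd'.2, one_mul]

/-- The total variation between discounted state-action occupancy measures of two policies
is controlled by the maximal per-state total variation of the policies:
`(1/(1−γ)) ∑_{s,a} |d_{π'}(s)π'(a|s) − d_π(s)π(a|s)| ≤ (1/(1−γ)²) max_s ∑_a |π'(a|s) − π(a|s)|`. -/
theorem occupancy_tv_le_policy_tv {S A : Type*} [Fintype S] [DecidableEq S] [Nonempty S]
    [Fintype A]
    (γ : ℝ) (hγ0 : 0 ≤ γ) (hγ1 : γ < 1)
    (ρ : S → ℝ) (hρ0 : ∀ s, 0 ≤ ρ s) (hρ1 : ∑ s, ρ s = 1)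
    (P : S → A → S → ℝ) (hP0 : ∀ s a s', 0 ≤ P s a s') (hP1 : ∀ s a, ∑ s', P s a s' = 1)
    (π π' : S → A → ℝ)
    (hπ0 : ∀ s a, 0 ≤ π s a) (hπ1 : ∀ s, ∑ a, π s a = 1)
    (hπ'0 : ∀ s a, 0 ≤ π' s a) (hπ'1 : ∀ s, ∑ a, π' s a = 1) :
    (1 / (1 - γ)) * ∑ s, ∑ a,
        |discountedVisitation γ ρ P π' s * π' s a - discountedVisitation γ ρ P π s * π s a|
      ≤ (1 / (1 - γ) ^ 2) *
        Finset.univ.sup' Finset.univ_nonempty (fun s => ∑ a, |π' s a - π s a|) := by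
  set ε := univ.sup' univ_nonempty fun s => ∑ a, |π' s a - π s a|
  have hε (s : S) : ∑ a, |π' s a - π s a| ≤ ε :=
    le_sup' (fun s => ∑ a, |π' s a - π s a|) (mem_univ s)
  have hρ : ρ ∈ stdSimplex ℝ S := ⟨hρ0, hρ1⟩
  have hP (s : S) (a : A) : P s a ∈ stdSimplex ℝ S := ⟨hP0 s a, hP1 s a⟩
  have hπ (s : S) : π s ∈ stdSimplex ℝ A := ⟨hπ0 s, hπ1 s⟩
  have hK := policyKernel_mem_rowStochastic hP hπ
  have hπ' (s : S) : π' s ∈ stdSimplex ℝ A := ⟨hπ'0 s, hπ'1 s⟩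
  have hK' := policyKernel_mem_rowStochastic hP hπ'
  have hγ : |γ| < 1 := abs_lt.2 ⟨by linarith, hγ1⟩
  have hd' := discountedVisitation_mem_stdSimplex hK' hρ hγ0 hγ1
  have hvisit := sum_abs_sub_le_of_eq_add_vecMul hK hd' hγ0 hγ1
    (fun s => policyKernel_sub π π' ▸ (sum_abs_policyKernel_le hP _ s).trans (hε s))
    (discountedVisitation_eq_add_vecMul hK hρ hγ) (discountedVisitation_eq_add_vecMul hK' hρ hγ)
  have h1γ : 0 < 1 - γ := by linarith
  calc _ ≤ 1 / (1 - γ) * (ε + γ * ε / (1 - γ)) := by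
        gcongr
        exact (sum_abs_mul_sub_mul_le hd' hπ hε).trans (by gcongr)
    _ = 1 / (1 - γ) ^ 2 * ε := by field_simp; ring
end
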